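/- If u ∈ C([−T,T], H^s_+(𝕋)), s > 3/2, solves i∂_t u + ∂_x² u + 2DΠ(|u|²)u = 0, then ∂_t u = B_u u − i L_u² u, with L_u = D − T_u T_ū and B_u = T_u T_{∂_x ū} − T_{∂_x u} T_ū + i(T_u T_ū)². -/

import Mathlib

open scoped BigOperators
open Filter

noncomputable section

/-!  Fourier–coefficient model of the circle `𝕋 = ℝ/2πℤ`.

A function `u ∈ L²₊(𝕋)` (Hardy space) is identified with its sequence of
Fourier coefficients `u : ℕ → ℂ`, `u n = û(n)`; a general function on the
circle is identified with `f : ℤ → ℂ`.  The inner product is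
`⟨u,v⟩ = (1/2π)∫ u v̄ = Σ û(n) conj(v̂(n))`. -/

/-- Inner product `⟨u,v⟩ = Σₙ û(n) conj(v̂(n))` on the Hardy space. -/
def hinner (u v : ℕ → ℂ) : ℂ := ∑' n : ℕ, u n * (starRingEnd ℂ) (v n)

/-- Squared `L²` norm. -/
def l2sq (u : ℕ → ℂ) : ℝ := ∑' n : ℕ, ‖u n‖ ^ 2

/-- Membership in the Hardy space `L²₊(𝕋)`. -/
def MemL2 (u : ℕ → ℂ) : Prop := Summable fun n : ℕ => ‖u n‖ ^ 2

/-- Membership in the Hardy–Sobolev space `H^s₊(𝕋)`. -/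
def MemHs (s : ℝ) (u : ℕ → ℂ) : Prop :=
  Summable fun n : ℕ => (1 + (n : ℝ) ^ 2) ^ s * ‖u n‖ ^ 2

/-- The quadratic form `⟨Dh, h⟩ = Σ k |ĥ(k)|²` of `D = -i∂ₓ`. -/
def dform (h : ℕ → ℂ) : ℝ := ∑' k : ℕ, (k : ℝ) * ‖h k‖ ^ 2

/-- Toeplitz operator with anti-analytic symbol `ū`:
`(T_ū h)(n) = (Π(ū h))^(n) = Σ_p ĥ(n+p) conj(û(p))`. -/
def Tbar (u h : ℕ → ℂ) : ℕ → ℂ :=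
  fun n => ∑' p : ℕ, h (n + p) * (starRingEnd ℂ) (u p)

/-- Toeplitz operator with analytic symbol `u`:
`(T_u h)(n) = (Π(u h))^(n) = Σ_{k ≤ n} û(n-k) ĥ(k)`. -/
def Tan (u h : ℕ → ℂ) : ℕ → ℂ :=
  fun n => ∑ k ∈ Finset.range (n + 1), u (n - k) * h k

/-- `D = -i ∂ₓ` in Fourier coefficients. -/
def Dop (h : ℕ → ℂ) : ℕ → ℂ := fun n => (n : ℂ) * h n

/-- `∂ₓ` in Fourier coefficients. -/
def dx (u : ℕ → ℂ) : ℕ → ℂ := fun n => Complex.I * (n : ℂ) * u n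

/-- The Lax operator `L_u = D - T_u T_ū`. -/
def Lop (u h : ℕ → ℂ) : ℕ → ℂ := fun n => Dop h n - Tan u (Tbar u h) n

/-- The operator `B_u = T_u T_{∂ₓū} - T_{∂ₓu} T_ū + i (T_u T_ū)²`. -/
def Bop (u h : ℕ → ℂ) : ℕ → ℂ := fun n =>
  Tan u (Tbar (dx u) h) n - Tan (dx u) (Tbar u h) n
    + Complex.I * Tan u (Tbar u (Tan u (Tbar u h))) n

/-- The shift operator `S : h ↦ e^{ix} h`. -/
def S (h : ℕ → ℂ) : ℕ → ℂ := fun n => if n = 0 then 0 else h (n - 1)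

/-- The adjoint shift `S* = T_{e^{-ix}}`. -/
def Sstar (h : ℕ → ℂ) : ℕ → ℂ := fun n => h (n + 1)

/-- The constant function `1`. -/
def one : ℕ → ℂ := fun n => if n = 0 then 1 else 0

/- general functions on the circle, via two-sided Fourier coefficients -/

/-- Fourier coefficients of the complex conjugate: `(f̄)^(n) = conj (f̂(-n))`. -/
def conjZ (a : ℤ → ℂ) : ℤ → ℂ := fun n => (starRingEnd ℂ) (a (-n))

/-- A Hardy-space function viewed as a function on the circle. -/
def extZ (u : ℕ → ℂ) : ℤ → ℂ := fun n => if 0 ≤ n then u n.toNat else 0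

/-- Fourier coefficients of a pointwise product (convolution). -/
def mulZ (a b : ℤ → ℂ) : ℤ → ℂ := fun n => ∑' m : ℤ, a m * b (n - m)

/-- `∂ₓ` in two-sided Fourier coefficients. -/
def dxZ (a : ℤ → ℂ) : ℤ → ℂ := fun n => Complex.I * (n : ℂ) * a n

/-- The Szegő projector `Π`, keeping only nonnegative modes. -/
def PiProj (a : ℤ → ℂ) : ℤ → ℂ := fun n => if 0 ≤ n then a n else 0

/-- The Szegő projector with values in the Hardy space. -/
def PiZ (a : ℤ → ℂ) : ℕ → ℂ := fun n => a (n : ℤ)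

/-- Membership in `L²(𝕋)`. -/
def MemL2Z (a : ℤ → ℂ) : Prop := Summable fun n : ℤ => ‖a n‖ ^ 2

/-- Fourier coefficient of the nonlinearity `D Π(|u|²) · u`
(note `Π(|u|²)^(k) = Σ_p û(k+p) conj(û(p)) = (T_ū u)(k)`). -/
def NLcoeff (u : ℕ → ℂ) : ℕ → ℂ :=
  fun n => ∑ k ∈ Finset.range (n + 1), (k : ℂ) * Tbar u u k * u (n - k)

/-- `u : ℝ → (ℕ → ℂ)` is an `H^s`-solution of the focusing Calogero–Sutherland
DNLS equation `i∂ₜu + ∂ₓ²u + 2DΠ(|u|²)u = 0` on `[-T,T]`, in Fourier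
coefficients: `∂ₜ û(n) = i(-n² û(n) + 2 (DΠ(|u|²)u)^(n))`. -/
def SolvesCS (s : ℝ) (T : ℝ) (u : ℝ → ℕ → ℂ) : Prop :=
  (∀ t ∈ Set.Icc (-T) T, MemHs s (u t)) ∧
  (∀ n : ℕ, ContinuousOn (fun t => u t n) (Set.Icc (-T) T)) ∧
  ∀ t ∈ Set.Icc (-T) T, ∀ n : ℕ,
    HasDerivAt (fun τ => u τ n)
      (Complex.I * (-(n : ℂ) ^ 2 * u t n + 2 * NLcoeff (u t) n)) t



/-! In Fourier variables the theorem is an algebraic identity between Toeplitz operators. The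
commutator formulas `T_{∂ₓu} = i[D, T_u]` and `T_{∂ₓū} = i[D, T_ū]` reduce `B_u u − i L_u² u` to
`2i T_u D T_ū u − i D²u`, which is the right-hand side `i∂ₓ²u + 2i DΠ(|u|²)u` of the equation
because `Π(|u|²) = T_ū u`. The series behind `T_ū` may be split and rearranged because for
`s > 3/2` both `u` and `Du` lie in `ℓ¹` (AM–GM against the summable weight `(1 + n²)^{1-s}`), so every
sequence `T_ū` is applied to is bounded. -/

open ComplexConjugate

lemma summable_one_add_sq_rpow_neg {σ : ℝ} (hσ : 1 / 2 < σ) :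
    Summable fun p : ℕ => (1 + (p : ℝ) ^ 2) ^ (-σ) := by
  rw [← summable_nat_add_iff 1]
  refine Summable.of_nonneg_of_le (fun n => by positivity) (fun n => ?_)
    ((summable_nat_add_iff 1).mpr (Real.summable_nat_rpow.2 (by linarith : 2 * -σ < -1)))
  have hx : (0 : ℝ) < ((n + 1 : ℕ) : ℝ) := by positivity
  rw [Real.rpow_mul hx.le, Real.rpow_two]
  exact Real.rpow_le_rpow_of_nonpos (by positivity) (by linarith) (by linarith)

lemma rpow_mul_le_add_rpow_mul_sq_div_two {t : ℝ} (ht : 0 < t) (x r s : ℝ) :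
    t ^ r * x ≤ (t ^ (2 * r - s) + t ^ s * x ^ 2) / 2 := by
  have hamgm := two_mul_le_add_sq (t ^ (r - s / 2)) (t ^ (s / 2) * x)
  have hprod : t ^ (r - s / 2) * (t ^ (s / 2) * x) = t ^ r * x := by
    rw [← mul_assoc, ← Real.rpow_add ht]; ring_nf
  have hsq₁ : (t ^ (r - s / 2)) ^ 2 = t ^ (2 * r - s) := by
    rw [← Real.rpow_natCast, ← Real.rpow_mul ht.le]; ring_nf
  have hsq₂ : (t ^ (s / 2) * x) ^ 2 = t ^ s * x ^ 2 := by
    rw [mul_pow, ← Real.rpow_natCast, ← Real.rpow_mul ht.le]; ring_nf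
  rw [mul_assoc, hprod, hsq₁, hsq₂] at hamgm
  linarith

lemma MemHs.summable_rpow_mul_norm {s r : ℝ} {v : ℕ → ℂ} (hv : MemHs s v)
    (hrs : 2 * r + 1 / 2 < s) :
    Summable fun p : ℕ => (1 + (p : ℝ) ^ 2) ^ r * ‖v p‖ := by
  have hmajor := ((summable_one_add_sq_rpow_neg (σ := s - 2 * r) (by linarith)).add hv).div_const 2
  refine Summable.of_nonneg_of_le (fun p => by positivity) (fun p => ?_) hmajor
  simpa [neg_sub] using rpow_mul_le_add_rpow_mul_sq_div_two (t := 1 + (p : ℝ) ^ 2) (by positivity)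
    ‖v p‖ r s

lemma MemHs.summable_norm {s : ℝ} {v : ℕ → ℂ} (hv : MemHs s v) (hs : 1 / 2 < s) :
    Summable fun p : ℕ => ‖v p‖ := by
  simpa using hv.summable_rpow_mul_norm (r := 0) (by linarith)

lemma MemHs.summable_norm_Dop {s : ℝ} {v : ℕ → ℂ} (hv : MemHs s v) (hs : 3 / 2 < s) :
    Summable fun p : ℕ => ‖Dop v p‖ := by
  refine Summable.of_nonneg_of_le (fun p => norm_nonneg _) (fun p => ?_)
    (hv.summable_rpow_mul_norm (r := 1 / 2) (by linarith))
  rw [Dop, norm_mul, Complex.norm_natCast, ← Real.sqrt_eq_rpow]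
  gcongr
  exact Real.le_sqrt_of_sq_le (by linarith)

section Toeplitz

variable {u h : ℕ → ℂ} {C : ℝ}

lemma summable_shift_mul_conj (hh : ∀ n, ‖h n‖ ≤ C) (hu : Summable fun p => ‖u p‖) (k : ℕ) :
    Summable fun p => h (k + p) * conj (u p) :=
  Summable.of_norm_bounded (hu.mul_left C) fun p => by
    rw [norm_mul, RCLike.norm_conj]
    exact mul_le_mul_of_nonneg_right (hh _) (norm_nonneg _)

lemma norm_Tbar_le (hh : ∀ n, ‖h n‖ ≤ C) (hu : Summable fun p => ‖u p‖) (k : ℕ) :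
    ‖Tbar u h k‖ ≤ C * ∑' p, ‖u p‖ :=
  tsum_of_norm_bounded (hu.hasSum.mul_left C) fun p => by
    rw [norm_mul, RCLike.norm_conj]
    exact mul_le_mul_of_nonneg_right (hh _) (norm_nonneg _)

lemma norm_Tan_le (hh : ∀ n, ‖h n‖ ≤ C) (hu : Summable fun p => ‖u p‖) (n : ℕ) :
    ‖Tan u h n‖ ≤ C * ∑' p, ‖u p‖ := by
  have hC : 0 ≤ C := (norm_nonneg _).trans (hh 0)
  calc ‖Tan u h n‖ ≤ ∑ k ∈ Finset.range (n + 1), C * ‖u (n - k)‖ :=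
        (norm_sum_le _ _).trans <| Finset.sum_le_sum fun k _ => by
          rw [norm_mul, mul_comm]
          exact mul_le_mul_of_nonneg_right (hh k) (norm_nonneg _)
    _ = C * ∑ k ∈ Finset.range (n + 1), ‖u k‖ := by
        rw [← Finset.mul_sum]
        simpa using congrArg (C * ·) (Finset.sum_range_reflect (fun k => ‖u k‖) (n + 1))
    _ ≤ C * ∑' p, ‖u p‖ :=
        mul_le_mul_of_nonneg_left (hu.sum_le_tsum _ fun _ _ => norm_nonneg _) hC

lemma Tbar_sub {f g : ℕ → ℂ} (hf : ∀ k, Summable fun p => f (k + p) * conj (u p))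
    (hg : ∀ k, Summable fun p => g (k + p) * conj (u p)) :
    Tbar u (f - g) = Tbar u f - Tbar u g :=
  funext fun k => by
    simp only [Tbar, Pi.sub_apply, sub_mul]
    exact (hf k).tsum_sub (hg k)

lemma Tan_sub (f g : ℕ → ℂ) : Tan u (f - g) = Tan u f - Tan u g :=
  funext fun _ => by simp only [Tan, Pi.sub_apply, mul_sub, Finset.sum_sub_distrib]

lemma Tan_smul (c : ℂ) (f : ℕ → ℂ) : Tan u (c • f) = c • Tan u f :=
  funext fun _ => by
    simp only [Tan, Pi.smul_apply, smul_eq_mul, Finset.mul_sum]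
    exact Finset.sum_congr rfl fun _ _ => mul_left_comm _ _ _

lemma Dop_sub (f g : ℕ → ℂ) : Dop (f - g) = Dop f - Dop g :=
  funext fun _ => mul_sub _ _ _

lemma Tan_dx : Tan (dx u) h = Complex.I • (Dop (Tan u h) - Tan u (Dop h)) :=
  funext fun n => by
    simp only [Tan, dx, Dop, Pi.smul_apply, Pi.sub_apply, smul_eq_mul, Finset.mul_sum,
      ← Finset.sum_sub_distrib]
    refine Finset.sum_congr rfl fun k hk => ?_
    rw [Nat.cast_sub (Nat.lt_succ_iff.mp (Finset.mem_range.mp hk))]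
    ring

lemma Tbar_dx (hh : ∀ k, Summable fun p => h (k + p) * conj (u p))
    (hDh : ∀ k, Summable fun p => Dop h (k + p) * conj (u p)) :
    Tbar (dx u) h = Complex.I • (Dop (Tbar u h) - Tbar u (Dop h)) :=
  funext fun k => calc
    Tbar (dx u) h k = ∑' p, (Complex.I * k * (h (k + p) * conj (u p))
        - Complex.I * (Dop h (k + p) * conj (u p))) :=
      tsum_congr fun p => by
        simp only [dx, Dop, map_mul, Complex.conj_I, Complex.conj_natCast]
        push_cast
        ring
    _ = Complex.I * k * Tbar u h k - Complex.I * Tbar u (Dop h) k := by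
      rw [((hh k).mul_left _).tsum_sub ((hDh k).mul_left _), tsum_mul_left, tsum_mul_left]
      rfl
    _ = (Complex.I • (Dop (Tbar u h) - Tbar u (Dop h))) k := by
      simp only [Dop, Pi.smul_apply, Pi.sub_apply, smul_eq_mul]
      ring

end Toeplitz

lemma NLcoeff_eq_Tan (u : ℕ → ℂ) : NLcoeff u = Tan u (Dop (Tbar u u)) :=
  funext fun _ => Finset.sum_congr rfl fun _ _ => by simp only [Dop]; ring

lemma Bop_sub_I_mul_Lop_Lop {v : ℕ → ℂ} (hv : Summable fun p => ‖v p‖)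
    (hDv : Summable fun p => ‖Dop v p‖) (n : ℕ) :
    Bop v v n - Complex.I * Lop v (Lop v v) n
      = Complex.I * (-(n : ℂ) ^ 2 * v n + 2 * NLcoeff v n) := by
  set a := Tbar v v
  have hbv : ∀ n, ‖v n‖ ≤ ∑' p, ‖v p‖ := fun n => hv.le_tsum n fun _ _ => norm_nonneg _
  have hbDv : ∀ n, ‖Dop v n‖ ≤ ∑' p, ‖Dop v p‖ := fun n => hDv.le_tsum n fun _ _ => norm_nonneg _
  have sv := summable_shift_mul_conj hbv hv
  have sDv := summable_shift_mul_conj hbDv hv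
  have sAv := summable_shift_mul_conj (norm_Tan_le (norm_Tbar_le hbv hv) hv) hv
  have hL : Lop v (Lop v v) = Dop (Dop v) - Dop (Tan v a)
      - (Tan v (Tbar v (Dop v)) - Tan v (Tbar v (Tan v a))) := by
    change Dop (Dop v - Tan v a) - Tan v (Tbar v (Dop v - Tan v a)) = _
    rw [Dop_sub, Tbar_sub sDv sAv, Tan_sub]
  have hB : Bop v v = Complex.I • (Tan v (Dop a) - Tan v (Tbar v (Dop v)))
      - Complex.I • (Dop (Tan v a) - Tan v (Dop a)) + Complex.I • Tan v (Tbar v (Tan v a)) := by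
    change Tan v (Tbar (dx v) v) - Tan (dx v) a + Complex.I • Tan v (Tbar v (Tan v a)) = _
    rw [Tbar_dx sv sDv, Tan_dx, Tan_smul, Tan_sub]
  rw [hB, hL, NLcoeff_eq_Tan]
  simp only [Pi.add_apply, Pi.sub_apply, Pi.smul_apply, smul_eq_mul, Dop]
  ring

/-- If `u ∈ C([-T,T], H^s₊(𝕋))`, `s > 3/2`, solves
`i∂ₜu + ∂ₓ²u + 2DΠ(|u|²)u = 0`, then `∂ₜu = B_u u − i L_u² u`. -/
theorem evolution_via_lax (s T : ℝ) (hs : 3/2 < s) (u : ℝ → ℕ → ℂ)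
    (hsol : SolvesCS s T u) :
    ∀ t ∈ Set.Icc (-T) T, ∀ n : ℕ,
      HasDerivAt (fun τ => u τ n)
        (Bop (u t) (u t) n - Complex.I * Lop (u t) (Lop (u t) (u t)) n) t := by
  intro t ht n
  have hut := hsol.1 t ht
  rw [Bop_sub_I_mul_Lop_Lop (hut.summable_norm (by linarith)) (hut.summable_norm_Dop hs)]
  exact hsol.2.2 t ht n

end
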